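/- arXiv:1605.03929 — 5 statements merged into one kernel-verified Lean document; each statement's English description precedes it below -/
import Mathlib

section
/- Let α = (a_1 < ... < a_ℓ) ⊆ {1,...,m} and let 𝒜 = (A_1 ⊂ ... ⊂ A_ℓ) and ℬ = (B_1 ⊂ ... ⊂ B_ℓ) be two α-flags in V = F^m (i.e. dim A_i = dim B_i = a_i). Let α_nc = {a_i ∈ α : a_i + 1 ∉ α}. If A_i = B_i for all i with a_i ∈ α_nc, then the Schubert varieties coincide: {W : dim W = ℓ, ∀i dim(W ∩ A_i) ≥ i} = {W : dim W = ℓ, ∀i dim(W ∩ B_i) ≥ i}. -/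
/-!
If `a j = a i + 1` then `A i` has codimension one in `A j`, so intersecting with `W` loses at
most one dimension: `dim (W ∩ A i) ≥ dim (W ∩ A j) - 1 ≥ j ≥ i + 1`. Hence the Schubert
condition at a consecutive index follows from the one at a larger index, and by downward
induction all conditions follow from those at the nonconsecutive indices, where the two flags agree.
-/

open Module

section

variable {K V : Type*} [DivisionRing K] [AddCommGroup V] [Module K V] [FiniteDimensional K V]

theorem Submodule.finrank_inf_add_finrank_le_of_le (W : Submodule K V) {U U' : Submodule K V}
    (hU : U ≤ U') :
    finrank K ↥(W ⊓ U') + finrank K U ≤ finrank K ↥(W ⊓ U) + finrank K U' := by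
  have hinf : W ⊓ U' ⊓ U = W ⊓ U := by rw [inf_assoc, inf_eq_right.mpr hU]
  have hsup : finrank K ↥(W ⊓ U' ⊔ U) ≤ finrank K U' :=
    Submodule.finrank_mono (sup_le inf_le_right hU)
  have := Submodule.finrank_sup_add_finrank_inf_eq (W ⊓ U') U
  rw [hinf] at this
  omega

theorem schubert_condition_of_nonconsecutive {ℓ : ℕ} {a : Fin ℓ → ℕ} (ha : StrictMono a)
    {A : Fin ℓ → Submodule K V} (hA : Monotone A) (hdA : ∀ i, finrank K ↥(A i) = a i)
    {W : Submodule K V}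
    (hW : ∀ i : Fin ℓ, (¬ ∃ j : Fin ℓ, a j = a i + 1) → (i : ℕ) + 1 ≤ finrank K ↥(W ⊓ A i))
    (i : Fin ℓ) : (i : ℕ) + 1 ≤ finrank K ↥(W ⊓ A i) := by
  induction i using WellFoundedGT.induction with
  | _ i ih =>
    by_cases hcons : ∃ j : Fin ℓ, a j = a i + 1
    · obtain ⟨j, hj⟩ := hcons
      have hij : i < j := ha.lt_iff_lt.mp (by omega)
      have hcodim := W.finrank_inf_add_finrank_le_of_le (hA hij.le)
      have hj' := ih j hij
      rw [hdA, hdA, hj] at hcodim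
      have : (i : ℕ) < j := hij
      omega
    · exact hW i hcons

theorem schubert_condition_of_eq_on_nonconsecutive {ℓ : ℕ} {a : Fin ℓ → ℕ} (ha : StrictMono a)
    {A B : Fin ℓ → Submodule K V} (hB : Monotone B) (hdB : ∀ i, finrank K ↥(B i) = a i)
    (hnc : ∀ i : Fin ℓ, (¬ ∃ j : Fin ℓ, a j = a i + 1) → A i = B i) {W : Submodule K V}
    (hW : ∀ i : Fin ℓ, (i : ℕ) + 1 ≤ finrank K ↥(W ⊓ A i)) :
    ∀ i : Fin ℓ, (i : ℕ) + 1 ≤ finrank K ↥(W ⊓ B i) :=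
  schubert_condition_of_nonconsecutive ha hB hdB fun i hi => hnc i hi ▸ hW i

end

theorem schubert_eq_of_eq_on_nonconsecutive_general
    (F : Type*) [Field F] (m ℓ : ℕ)
    (a : Fin ℓ → ℕ) (ha : StrictMono a)
    (A B : Fin ℓ → Submodule F (Fin m → F))
    (hAmono : StrictMono A) (hBmono : StrictMono B)
    (hdA : ∀ i, finrank F ↥(A i) = a i) (hdB : ∀ i, finrank F ↥(B i) = a i)
    (hnc : ∀ i : Fin ℓ, (¬ ∃ j : Fin ℓ, a j = a i + 1) → A i = B i) :
    {W : Submodule F (Fin m → F) |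
        finrank F ↥W = ℓ ∧ ∀ i : Fin ℓ, (i : ℕ) + 1 ≤ finrank F ↥(W ⊓ A i)} =
    {W : Submodule F (Fin m → F) |
        finrank F ↥W = ℓ ∧ ∀ i : Fin ℓ, (i : ℕ) + 1 ≤ finrank F ↥(W ⊓ B i)} := by
  ext W
  exact and_congr_right fun _ =>
    ⟨schubert_condition_of_eq_on_nonconsecutive ha hBmono.monotone hdB hnc,
      schubert_condition_of_eq_on_nonconsecutive ha hAmono.monotone hdA
        fun i hi => (hnc i hi).symm⟩

/-- If two α-flags 𝒜 and ℬ agree on all indices in the nonconsecutive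
subset α_nc = {a_i ∈ α : a_i + 1 ∉ α}, then the Schubert varieties coincide. -/
theorem schubert_eq_of_eq_on_nonconsecutive
    (F : Type*) [Field F] (m ℓ : ℕ)
    (a : Fin ℓ → ℕ) (ha : StrictMono a) (hrange : ∀ j, 1 ≤ a j ∧ a j ≤ m)
    (A B : Fin ℓ → Submodule F (Fin m → F))
    (hAmono : StrictMono A) (hBmono : StrictMono B)
    (hdA : ∀ i, finrank F ↥(A i) = a i) (hdB : ∀ i, finrank F ↥(B i) = a i)
    (hnc : ∀ i : Fin ℓ, (¬ ∃ j : Fin ℓ, a j = a i + 1) → A i = B i) :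
    {W : Submodule F (Fin m → F) |
        finrank F ↥W = ℓ ∧ ∀ i : Fin ℓ, (i : ℕ) + 1 ≤ finrank F ↥(W ⊓ A i)} =
    {W : Submodule F (Fin m → F) |
        finrank F ↥W = ℓ ∧ ∀ i : Fin ℓ, (i : ℕ) + 1 ≤ finrank F ↥(W ⊓ B i)} :=
  schubert_eq_of_eq_on_nonconsecutive_general F m ℓ a ha A B hAmono hBmono hdA hdB hnc
end

section
/- Let α = (a_1 < ... < a_ℓ) ⊆ {1,...,m} and let 𝒜 and ℬ be two α-flags in V = F^m. Then Ω_α^𝒜 = Ω_α^ℬ if and only if A_i = B_i for all i with a_i ∈ α_nc. -/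
open Module

section Aux

variable {F : Type*} [Field F] {V : Type*} [AddCommGroup V] [Module F V]
  [FiniteDimensional F V]

omit [FiniteDimensional F V] in
/-- A subspace not contained in either of two subspaces contains an element
outside both. -/
private lemma aux_exists_notMem_pair {T S₁ S₂ : Submodule F V}
    (h1 : ¬ T ≤ S₁) (h2 : ¬ T ≤ S₂) : ∃ x ∈ T, x ∉ S₁ ∧ x ∉ S₂ := by
  obtain ⟨x, hxT, hx1⟩ := SetLike.not_le_iff_exists.mp h1
  obtain ⟨y, hyT, hy2⟩ := SetLike.not_le_iff_exists.mp h2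
  by_cases hx2 : x ∈ S₂
  · by_cases hy1 : y ∈ S₁
    · refine ⟨x + y, add_mem hxT hyT, fun h => hx1 ?_, fun h => hy2 ?_⟩
      · have := sub_mem h hy1; simpa using this
      · have := sub_mem h hx2; simpa using this
    · exact ⟨y, hyT, hy1, hy2⟩
  · exact ⟨x, hxT, hx1, hx2⟩

private lemma aux_finrank_sup_span {W : Submodule F V} {w : V} (hw : w ∉ W) :
    finrank F ↥(W ⊔ Submodule.span F {w}) = finrank F ↥W + 1 := by
  have hw0 : w ≠ 0 := fun h => hw (h ▸ W.zero_mem)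
  have hdisj : W ⊓ Submodule.span F {w} = ⊥ :=
    disjoint_iff.mp ((Submodule.disjoint_span_singleton' hw0).mpr hw)
  have h := Submodule.finrank_sup_add_finrank_inf_eq W (Submodule.span F {w})
  rw [hdisj, finrank_bot, finrank_span_singleton hw0] at h
  omega

/-- If `X ≤ Y` of codimension at most 1, the intersection with `W` drops by
at most 1. -/
private lemma aux_inf_drop {W X Y : Submodule F V} (hXY : X ≤ Y)
    (h : finrank F ↥Y ≤ finrank F ↥X + 1) :
    finrank F ↥(W ⊓ Y) ≤ finrank F ↥(W ⊓ X) + 1 := by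
  have h1 : (W ⊓ Y) ⊓ X = W ⊓ X := by
    rw [inf_assoc, inf_eq_right.mpr hXY]
  have h2 : (W ⊓ Y) ⊔ X ≤ Y := sup_le inf_le_right hXY
  have h3 := Submodule.finrank_sup_add_finrank_inf_eq (W ⊓ Y) X
  rw [h1] at h3
  have h4 : finrank F ↥((W ⊓ Y) ⊔ X) ≤ finrank F ↥Y := Submodule.finrank_mono h2
  have h5 : finrank F ↥X ≤ finrank F ↥((W ⊓ Y) ⊔ X) := Submodule.finrank_mono le_sup_right
  have h6 : finrank F ↥(W ⊓ Y) ≤ finrank F ↥Y := Submodule.finrank_mono inf_le_right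
  omega

end Aux

set_option maxHeartbeats 1000000 in
/-- Ω_α^𝒜 = Ω_α^ℬ if and only if A_i = B_i for all i with a_i ∈ α_nc. -/
theorem schubert_eq_iff_eq_on_nonconsecutive
    (F : Type*) [Field F] (m ℓ : ℕ)
    (a : Fin ℓ → ℕ) (ha : StrictMono a) (hrange : ∀ j, 1 ≤ a j ∧ a j ≤ m)
    (A B : Fin ℓ → Submodule F (Fin m → F))
    (hAmono : StrictMono A) (hBmono : StrictMono B)
    (hdA : ∀ i, finrank F ↥(A i) = a i) (hdB : ∀ i, finrank F ↥(B i) = a i) :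
    {W : Submodule F (Fin m → F) |
        finrank F ↥W = ℓ ∧ ∀ i : Fin ℓ, (i : ℕ) + 1 ≤ finrank F ↥(W ⊓ A i)} =
    {W : Submodule F (Fin m → F) |
        finrank F ↥W = ℓ ∧ ∀ i : Fin ℓ, (i : ℕ) + 1 ≤ finrank F ↥(W ⊓ B i)} ↔
    (∀ i : Fin ℓ, (¬ ∃ j : Fin ℓ, a j = a i + 1) → A i = B i) := by
  -- a i ≥ i + 1
  have hage : ∀ n (hn : n < ℓ), n + 1 ≤ a ⟨n, hn⟩ := by
    intro n
    induction n with
    | zero => intro hn; exact (hrange _).1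
    | succ k ih =>
      intro hn
      have hk : k < ℓ := Nat.lt_of_succ_lt hn
      have h1 := ha (show (⟨k, hk⟩ : Fin ℓ) < ⟨k + 1, hn⟩ from
        Fin.mk_lt_mk.mpr (Nat.lt_succ_self _))
      have h2 := ih hk
      omega
  -- gap lemma: a p + d ≤ a ⟨p + d⟩
  have hgap : ∀ d (p : Fin ℓ) (h : (p : ℕ) + d < ℓ), a p + d ≤ a ⟨(p : ℕ) + d, h⟩ := by
    intro d
    induction d with
    | zero => intro p h; simp
    | succ k ih =>
      intro p h
      have hk : (p : ℕ) + k < ℓ := by omega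
      have h1 := ih p hk
      have h2 := ha (show (⟨(p : ℕ) + k, hk⟩ : Fin ℓ) < ⟨(p : ℕ) + (k + 1), h⟩ from
        Fin.mk_lt_mk.mpr (by omega))
      omega
  constructor
  · -- forward direction: equal Schubert sets ⇒ flags agree on nonconsecutive indices
    intro hset i₀ hnc
    by_contra hne
    set U : Submodule F (Fin m → F) := B i₀ with hU
    have hUrank : finrank F ↥U = a i₀ := by rw [hU]; exact hdB i₀
    -- A i₀ is not contained in B i₀
    have hnle : ¬ A i₀ ≤ U := by
      intro hle
      exact hne (Submodule.eq_of_le_of_finrank_eq hle (by rw [hdA, hUrank]))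
    have hℓpos : 0 < ℓ := i₀.pos
    -- inductive construction of W
    have key : ∀ j, ∀ (hj : j < ℓ), ∃ W S : Submodule F (Fin m → F),
        W ≤ A ⟨j, hj⟩ ∧
        finrank F ↥W = j + 1 ∧
        (∀ i : Fin ℓ, (i : ℕ) ≤ j → (i : ℕ) + 1 ≤ finrank F ↥(W ⊓ A i)) ∧
        S ≤ W ⊔ U ∧
        (j < (i₀ : ℕ) → S = U) ∧
        finrank F ↥S = a i₀ + (j + 1 - (i₀ : ℕ)) := by
      intro j
      induction j with
      | zero =>
        intro hj
        by_cases h0 : (i₀ : ℕ) = 0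
        · -- i₀ = 0 : pick w ∈ A i₀ \ U
          have hi₀ : i₀ = ⟨0, hj⟩ := Fin.ext h0
          obtain ⟨w, hwA, hwU⟩ := SetLike.not_le_iff_exists.mp hnle
          have hw0 : w ≠ 0 := fun h => hwU (h ▸ U.zero_mem)
          have hle : Submodule.span F {w} ≤ A i₀ := Submodule.span_le.mpr (by simpa using hwA)
          refine ⟨Submodule.span F {w}, Submodule.span F {w} ⊔ U, ?_, ?_, ?_, le_rfl, ?_, ?_⟩
          · rw [← hi₀]; exact hle
          · exact finrank_span_singleton hw0
          · intro i hi
            have hieq : i = i₀ := Fin.ext (by omega)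
            rw [hieq, inf_eq_left.mpr hle, finrank_span_singleton hw0]
            omega
          · intro hcon; omega
          · rw [sup_comm, aux_finrank_sup_span hwU, hUrank]
            omega
        · -- i₀ > 0 : pick any nonzero w ∈ A 0 and S = U
          have hA0 : ¬ A ⟨0, hj⟩ ≤ (⊥ : Submodule F (Fin m → F)) := by
            intro hle
            have h1 := Submodule.finrank_mono (M := Fin m → F) (R := F) hle
            rw [hdA, finrank_bot] at h1
            have h2 := hage 0 hj
            omega
          obtain ⟨w, hwA, hw0'⟩ := SetLike.not_le_iff_exists.mp hA0
          have hw0 : w ≠ 0 := by simpa using hw0'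
          have hle : Submodule.span F {w} ≤ A ⟨0, hj⟩ :=
            Submodule.span_le.mpr (by simpa using hwA)
          refine ⟨Submodule.span F {w}, U, hle, finrank_span_singleton hw0, ?_,
            le_sup_right, fun _ => rfl, ?_⟩
          · intro i hi
            have hieq : i = ⟨0, hj⟩ := Fin.ext (show (i : ℕ) = 0 by omega)
            rw [hieq, inf_eq_left.mpr hle, finrank_span_singleton hw0]
          · rw [hUrank]
            omega
      | succ j ihj =>
        intro hj1
        have hj : j < ℓ := Nat.lt_of_succ_lt hj1
        obtain ⟨W, S, hWA, hWrank, hWcond, hSle, hSU, hSrank⟩ := ihj hj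
        have hAj : A ⟨j, hj⟩ ≤ A ⟨j + 1, hj1⟩ :=
          (hAmono (show (⟨j, hj⟩ : Fin ℓ) < ⟨j + 1, hj1⟩ from
            Fin.mk_lt_mk.mpr (Nat.lt_succ_self _))).le
        have hWA' : W ≤ A ⟨j + 1, hj1⟩ := hWA.trans hAj
        have hnotW : ¬ A ⟨j + 1, hj1⟩ ≤ W := by
          intro hle
          have h1 := Submodule.finrank_mono (M := Fin m → F) (R := F) hle
          rw [hdA, hWrank] at h1
          have h2 := hage (j + 1) hj1
          omega
        by_cases hcase : j + 1 < (i₀ : ℕ)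
        · -- early stage: just extend W
          obtain ⟨w, hwA, hwW⟩ := SetLike.not_le_iff_exists.mp hnotW
          have hle : W ⊔ Submodule.span F {w} ≤ A ⟨j + 1, hj1⟩ :=
            sup_le hWA' (Submodule.span_le.mpr (by simpa using hwA))
          refine ⟨W ⊔ Submodule.span F {w}, U, hle, ?_, ?_, le_sup_right, fun _ => rfl, ?_⟩
          · rw [aux_finrank_sup_span hwW, hWrank]
          · intro i hi
            rcases Nat.lt_or_ge (i : ℕ) (j + 1) with h | h
            · have h1 := hWcond i (by omega)
              have hmono : W ⊓ A i ≤ (W ⊔ Submodule.span F {w}) ⊓ A i :=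
                inf_le_inf_right _ le_sup_left
              have h2 := Submodule.finrank_mono (M := Fin m → F) (R := F) hmono
              omega
            · have hieq : i = ⟨j + 1, hj1⟩ := Fin.ext (show (i : ℕ) = j + 1 by omega)
              rw [hieq, inf_eq_left.mpr hle, aux_finrank_sup_span hwW, hWrank]
          · rw [hUrank]
            omega
        · -- late stage: extend W avoiding S as well
          have hnotS : ¬ A ⟨j + 1, hj1⟩ ≤ S := by
            rcases Nat.lt_or_ge j (i₀ : ℕ) with hji | hji
            · -- j + 1 = i₀, S = U
              have hSeq : S = U := hSU hji
              have hind : (⟨j + 1, hj1⟩ : Fin ℓ) = i₀ := Fin.ext (show j + 1 = (i₀ : ℕ) by omega)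
              rw [hind, hSeq]
              exact hnle
            · -- j + 1 > i₀ : dimension count using the nonconsecutive gap
              intro hle
              have hdim := Submodule.finrank_mono (M := Fin m → F) (R := F) hle
              rw [hdA, hSrank] at hdim
              -- a ⟨j+1⟩ ≥ a i₀ + 2 + (j - i₀)
              have hi₀1 : (i₀ : ℕ) + 1 < ℓ := by omega
              have hsucc : a i₀ + 2 ≤ a ⟨(i₀ : ℕ) + 1, hi₀1⟩ := by
                have hlt := ha (show i₀ < ⟨(i₀ : ℕ) + 1, hi₀1⟩ from
                  Fin.lt_def.mpr (Nat.lt_succ_self _))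
                have hneq : a ⟨(i₀ : ℕ) + 1, hi₀1⟩ ≠ a i₀ + 1 := by
                  intro hcon
                  exact hnc ⟨⟨(i₀ : ℕ) + 1, hi₀1⟩, hcon⟩
                omega
              have hge := hgap (j - (i₀ : ℕ)) ⟨(i₀ : ℕ) + 1, hi₀1⟩
                (show (i₀ : ℕ) + 1 + (j - (i₀ : ℕ)) < ℓ by omega)
              have heq : (⟨(i₀ : ℕ) + 1 + (j - (i₀ : ℕ)),
                  show (i₀ : ℕ) + 1 + (j - (i₀ : ℕ)) < ℓ by omega⟩ : Fin ℓ) =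
                  ⟨j + 1, hj1⟩ := Fin.ext (show (i₀ : ℕ) + 1 + (j - (i₀ : ℕ)) = j + 1 by omega)
              rw [heq] at hge
              omega
          obtain ⟨w, hwA, hwW, hwS⟩ := aux_exists_notMem_pair hnotW hnotS
          have hle : W ⊔ Submodule.span F {w} ≤ A ⟨j + 1, hj1⟩ :=
            sup_le hWA' (Submodule.span_le.mpr (by simpa using hwA))
          refine ⟨W ⊔ Submodule.span F {w}, S ⊔ Submodule.span F {w}, hle, ?_, ?_, ?_,
            fun hcon => absurd hcon hcase, ?_⟩
          · rw [aux_finrank_sup_span hwW, hWrank]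
          · intro i hi
            rcases Nat.lt_or_ge (i : ℕ) (j + 1) with h | h
            · have h1 := hWcond i (by omega)
              have hmono : W ⊓ A i ≤ (W ⊔ Submodule.span F {w}) ⊓ A i :=
                inf_le_inf_right _ le_sup_left
              have h2 := Submodule.finrank_mono (M := Fin m → F) (R := F) hmono
              omega
            · have hieq : i = ⟨j + 1, hj1⟩ := Fin.ext (show (i : ℕ) = j + 1 by omega)
              rw [hieq, inf_eq_left.mpr hle, aux_finrank_sup_span hwW, hWrank]
          · exact sup_le (hSle.trans (sup_le_sup_right le_sup_left U))
              (le_sup_right.trans (le_sup_left : W ⊔ Submodule.span F {w} ≤ _))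
          · rw [aux_finrank_sup_span hwS, hSrank]
            omega
    -- apply at j = ℓ - 1
    obtain ⟨W, S, hWA, hWrank, hWcond, hSle, _, hSrank⟩ := key (ℓ - 1) (by omega)
    have hWrank' : finrank F ↥W = ℓ := by rw [hWrank]; omega
    have hWmem : W ∈ {W : Submodule F (Fin m → F) |
        finrank F ↥W = ℓ ∧ ∀ i : Fin ℓ, (i : ℕ) + 1 ≤ finrank F ↥(W ⊓ A i)} :=
      ⟨hWrank', fun i => hWcond i (by have := i.isLt; omega)⟩
    rw [hset] at hWmem
    have hBi₀ : (i₀ : ℕ) + 1 ≤ finrank F ↥(W ⊓ U) := hWmem.2 i₀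
    -- but finrank (W ⊓ U) ≤ i₀
    have hsup : finrank F ↥S ≤ finrank F ↥(W ⊔ U) :=
      Submodule.finrank_mono (M := Fin m → F) (R := F) hSle
    have hform := Submodule.finrank_sup_add_finrank_inf_eq W U
    rw [hWrank', hUrank] at hform
    have hi₀lt : (i₀ : ℕ) < ℓ := i₀.isLt
    omega
  · -- backward direction
    intro h
    have main : ∀ (C D : Fin ℓ → Submodule F (Fin m → F)),
        StrictMono D → (∀ i, finrank F ↥(D i) = a i) →
        (∀ i : Fin ℓ, (¬ ∃ j : Fin ℓ, a j = a i + 1) → C i = D i) →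
        ∀ W : Submodule F (Fin m → F),
          (∀ i : Fin ℓ, (i : ℕ) + 1 ≤ finrank F ↥(W ⊓ C i)) →
          ∀ i : Fin ℓ, (i : ℕ) + 1 ≤ finrank F ↥(W ⊓ D i) := by
      intro C D hDmono hdD hCD W hWC
      have aux : ∀ k : ℕ, ∀ i : Fin ℓ, ℓ - (i : ℕ) ≤ k →
          (i : ℕ) + 1 ≤ finrank F ↥(W ⊓ D i) := by
        intro k
        induction k with
        | zero => intro i hik; have := i.isLt; omega
        | succ k ihk =>
          intro i hik
          by_cases hnc : ∃ j : Fin ℓ, a j = a i + 1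
          · obtain ⟨j, hj⟩ := hnc
            have hij : i < j := by
              rw [← ha.lt_iff_lt]
              omega
            have hij' : (i : ℕ) < (j : ℕ) := hij
            have hi1 : (i : ℕ) + 1 < ℓ := by
              have := j.isLt
              omega
            set i' : Fin ℓ := ⟨(i : ℕ) + 1, hi1⟩ with hi'
            have hii' : i < i' := Fin.lt_def.mpr (Nat.lt_succ_self _)
            have hi'j : i' ≤ j := Fin.le_def.mpr (show (i : ℕ) + 1 ≤ (j : ℕ) by omega)
            have hai' : a i' = a i + 1 := by
              have h1 := ha hii'
              have h2 := ha.monotone hi'j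
              omega
            have hrec : (i : ℕ) + 1 + 1 ≤ finrank F ↥(W ⊓ D i') :=
              ihk i' (show ℓ - ((i : ℕ) + 1) ≤ k by omega)
            have hdrop := aux_inf_drop (W := W) (hDmono hii').le
              (by rw [hdD, hdD, hai'])
            omega
          · rw [← hCD i hnc]
            exact hWC i
      intro i
      exact aux ℓ i (by omega)
    ext W
    simp only [Set.mem_setOf_eq]
    constructor
    · rintro ⟨hrk, hcond⟩
      exact ⟨hrk, main A B hBmono hdB h W hcond⟩
    · rintro ⟨hrk, hcond⟩
      exact ⟨hrk, main B A hAmono hdA (fun i hi => (h i hi).symm) W hcond⟩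
end

section
/- Let α ⊆ {1,...,m}, let 𝒜 be an α-flag in V = F^m, and let a_ℓ be the largest element of α. If B is another subspace with dim B = a_ℓ and B ≠ A_ℓ, then there exists an ℓ-dimensional subspace W with dim(W ∩ A_i) ≥ i for all i but dim(W ∩ B) < ℓ; i.e., W ∈ Ω_α^𝒜 but W is not contained in B. -/
open Module

/-- A module is never the union of two proper submodules (relative version). -/
lemma exists_mem_not_mem_two {F V : Type*} [Field F] [AddCommGroup V] [Module F V]
    (r p q : Submodule F V) (hp : ¬ r ≤ p) (hq : ¬ r ≤ q) :
    ∃ x ∈ r, x ∉ p ∧ x ∉ q := by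
  obtain ⟨x, hxr, hxp⟩ := SetLike.not_le_iff_exists.mp hp
  obtain ⟨y, hyr, hyq⟩ := SetLike.not_le_iff_exists.mp hq
  by_cases hxq : x ∈ q
  · by_cases hyp : y ∈ p
    · refine ⟨x + y, add_mem hxr hyr, ?_, ?_⟩
      · intro h
        exact hxp (by simpa using sub_mem h hyp)
      · intro h
        exact hyq (by simpa using sub_mem h hxq)
    · exact ⟨y, hyr, hyp, hyq⟩
  · exact ⟨x, hxr, hxp, hxq⟩

lemma finrank_sup_span_singleton {F V : Type*} [Field F] [AddCommGroup V] [Module F V]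
    [FiniteDimensional F V] (W : Submodule F V) {v : V} (hv : v ∉ W) :
    finrank F ↥(W ⊔ Submodule.span F {v}) = finrank F ↥W + 1 := by
  have hne : v ≠ 0 := fun h => hv (h ▸ W.zero_mem)
  have hdisj : Disjoint W (Submodule.span F {v}) :=
    Submodule.disjoint_span_singleton.mpr fun h => absurd h hv
  have h := Submodule.finrank_sup_add_finrank_inf_eq W (Submodule.span F {v})
  rw [disjoint_iff.mp hdisj] at h
  simp [finrank_span_singleton hne] at h
  omega

/-- If B is a subspace with dim B = a_ℓ (the largest element of α)
and B ≠ A_ℓ, then there exists an ℓ-dimensional subspace W satisfying all the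
Schubert conditions for 𝒜 but with dim(W ∩ B) < ℓ; in particular W ⊄ B. -/
theorem exists_schubert_witness_top
    (F : Type*) [Field F] (m ℓ : ℕ) (hℓ : 0 < ℓ)
    (a : Fin ℓ → ℕ) (ha : StrictMono a) (hrange : ∀ j, 1 ≤ a j ∧ a j ≤ m)
    (A : Fin ℓ → Submodule F (Fin m → F)) (hAmono : StrictMono A)
    (hdA : ∀ i, finrank F ↥(A i) = a i)
    (B : Submodule F (Fin m → F))
    (hB : finrank F ↥B = a ⟨ℓ - 1, Nat.sub_lt hℓ one_pos⟩)
    (hBne : B ≠ A ⟨ℓ - 1, Nat.sub_lt hℓ one_pos⟩) :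
    ∃ W : Submodule F (Fin m → F),
      finrank F ↥W = ℓ ∧
      (∀ i : Fin ℓ, (i : ℕ) + 1 ≤ finrank F ↥(W ⊓ A i)) ∧
      finrank F ↥(W ⊓ B) < ℓ ∧ ¬ W ≤ B := by
  classical
  -- a i ≥ i + 1
  have hge : ∀ n (h : n < ℓ), n + 1 ≤ a ⟨n, h⟩ := by
    intro n
    induction n with
    | zero => intro h; exact (hrange _).1
    | succ k ih =>
      intro h
      have hk : k < ℓ := Nat.lt_of_succ_lt h
      have h1 := ih hk
      have hlt : a ⟨k, hk⟩ < a ⟨k + 1, h⟩ := ha (by simp [Fin.lt_def])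
      omega
  -- build partial flags
  have claim : ∀ k (hk : k < ℓ), ∃ W : Submodule F (Fin m → F),
      finrank F ↥W = k ∧ W ≤ A ⟨k, hk⟩ ∧
      (∀ i : Fin ℓ, (i : ℕ) < k → (i : ℕ) + 1 ≤ finrank F ↥(W ⊓ A i)) := by
    intro k
    induction k with
    | zero =>
      intro hk
      exact ⟨⊥, finrank_bot F _, bot_le, fun i hi => absurd hi (Nat.not_lt_zero _)⟩
    | succ k ih =>
      intro hk
      have hkℓ : k < ℓ := Nat.lt_of_succ_lt hk
      obtain ⟨W, hW1, hW2, hW3⟩ := ih hkℓ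
      -- A ⟨k⟩ is not contained in W
      have hnle : ¬ A ⟨k, hkℓ⟩ ≤ W := by
        intro hle
        have := Submodule.finrank_mono hle
        rw [hdA, hW1] at this
        have := hge k hkℓ
        omega
      obtain ⟨v, hvA, hvW⟩ := SetLike.not_le_iff_exists.mp hnle
      refine ⟨W ⊔ Submodule.span F {v}, ?_, ?_, ?_⟩
      · rw [finrank_sup_span_singleton W hvW, hW1]
      · exact sup_le (hW2.trans (hAmono.monotone (by simp [Fin.le_def])))
          ((Submodule.span_singleton_le_iff_mem _ _).mpr
            ((hAmono.monotone (by simp [Fin.le_def] : (⟨k, hkℓ⟩ : Fin ℓ) ≤ ⟨k + 1, hk⟩)) hvA))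
      · intro i hi
        rcases Nat.lt_succ_iff_lt_or_eq.mp hi with hlt | heq
        · calc (i : ℕ) + 1 ≤ finrank F ↥(W ⊓ A i) := hW3 i hlt
            _ ≤ finrank F ↥((W ⊔ Submodule.span F {v}) ⊓ A i) :=
              Submodule.finrank_mono (inf_le_inf_right _ le_sup_left)
        · have hieq : i = ⟨k, hkℓ⟩ := Fin.ext heq
          subst hieq
          have hsub : W ⊔ Submodule.span F {v} ≤ A ⟨k, hkℓ⟩ :=
            sup_le hW2 ((Submodule.span_singleton_le_iff_mem _ _).mpr hvA)
          rw [inf_eq_left.mpr hsub, finrank_sup_span_singleton W hvW, hW1]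
  -- the top index
  have haℓ : ℓ ≤ a ⟨ℓ - 1, Nat.sub_lt hℓ one_pos⟩ := by
    have := hge (ℓ - 1) (Nat.sub_lt hℓ one_pos)
    omega
  set t : Fin ℓ := ⟨ℓ - 1, Nat.sub_lt hℓ one_pos⟩ with ht
  obtain ⟨W, hW1, hW2, hW3⟩ := claim (ℓ - 1) (Nat.sub_lt hℓ one_pos)
  have hnleW : ¬ A t ≤ W := by
    intro hle
    have := Submodule.finrank_mono hle
    rw [hdA, hW1] at this
    omega
  have hnleB : ¬ A t ≤ B := by
    intro hle
    exact hBne (Submodule.eq_of_le_of_finrank_le hle (by rw [hdA, hB])).symm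
  obtain ⟨v, hvA, hvW, hvB⟩ := exists_mem_not_mem_two (A t) W B hnleW hnleB
  refine ⟨W ⊔ Submodule.span F {v}, ?_, ?_, ?_, ?_⟩
  · rw [finrank_sup_span_singleton W hvW, hW1]; omega
  · intro i
    rcases lt_or_eq_of_le (by have := i.isLt; omega : (i : ℕ) ≤ ℓ - 1) with hlt | heq
    · calc (i : ℕ) + 1 ≤ finrank F ↥(W ⊓ A i) := hW3 i hlt
        _ ≤ finrank F ↥((W ⊔ Submodule.span F {v}) ⊓ A i) :=
          Submodule.finrank_mono (inf_le_inf_right _ le_sup_left)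
    · have hieq : i = t := Fin.ext heq
      subst hieq
      have hsub : W ⊔ Submodule.span F {v} ≤ A t :=
        sup_le hW2 ((Submodule.span_singleton_le_iff_mem _ _).mpr hvA)
      rw [inf_eq_left.mpr hsub, finrank_sup_span_singleton W hvW, hW1]
  · have hlt : (W ⊔ Submodule.span F {v}) ⊓ B < W ⊔ Submodule.span F {v} := by
      refine lt_of_le_of_ne inf_le_left ?_
      intro h
      have hvmem : v ∈ W ⊔ Submodule.span F {v} :=
        Submodule.mem_sup_right (Submodule.mem_span_singleton_self v)
      rw [← h] at hvmem
      exact hvB hvmem.2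
    have := Submodule.finrank_lt_finrank_of_lt hlt
    rw [finrank_sup_span_singleton W hvW, hW1] at this
    omega
  · intro hle
    exact hvB (hle (Submodule.mem_sup_right (Submodule.mem_span_singleton_self v)))
end

section
/- Let m = 2ℓ and let τ be the composition of a semilinear automorphism of subspace lattices with orthogonal complement (a contravariant correlation), so that τ reverses inclusions, satisfies dim τ(X) = m − dim X, and τ(X ∩ Y) = τ(X) + τ(Y). Then τ maps Ω_α^𝒜 onto itself only if α = {m+1−j : j ∉ α}. -/
open Module

/-!
If `τ` preserves `Ω = Ω_α^𝒜`, pull back `A_i` to `D_i = τ⁻¹(A_i)`, of dimension `m - a_i`. Choosing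
`W ∈ Ω` in general position with respect to `D_i` gives `dim (W ∩ D_i) ≤ #{j : a_j ≤ m - a_i}`,
while `τ W ∈ Ω` forces `dim (W ∩ D_i) ≥ ℓ + i + 1 - a_i`. If `a_i + a_j = m + 1` these two bounds
give `ℓ + i + 1 ≤ a_i + j` and, symmetrically, `ℓ + j + 1 ≤ a_j + i`, whose sum contradicts
`m = 2ℓ`. Hence `α` is disjoint from its reflection `m + 1 - α`, and a count of elements gives
`α = m + 1 - αᶜ`.
-/

theorem StrictMono.apply_add_le_apply_add {L : ℕ} {f : Fin L → ℕ} (hf : StrictMono f)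
    {i j : Fin L} (hij : i ≤ j) : f i + j ≤ f j + i := by
  have h := Finset.card_le_card_of_injOn f
    (s := Finset.Icc i j) (t := Finset.Icc (f i) (f j))
    (fun x hx => by
      rw [Finset.coe_Icc, Set.mem_Icc] at hx
      exact Finset.mem_Icc.2 ⟨hf.monotone hx.1, hf.monotone hx.2⟩)
    hf.injective.injOn
  rw [Fin.card_Icc, Nat.card_Icc] at h
  have : (i : ℕ) ≤ j := hij
  omega

theorem image_eq_image_reflect_sdiff {ℓ m : ℕ} {a : Fin ℓ → ℕ} (ha : Function.Injective a)
    (hrange : ∀ j, 1 ≤ a j ∧ a j ≤ m) (hm : m = 2 * ℓ) (hdisj : ∀ i j, a i + a j ≠ m + 1) :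
    Finset.univ.image a =
      (Finset.Icc 1 m \ Finset.univ.image a).image (fun j => m + 1 - j) := by
  have hsub : Finset.univ.image a ⊆ Finset.Icc 1 m := by
    simpa [Finset.subset_iff] using hrange
  have hcard : (Finset.univ.image a).card = ℓ := by
    rw [Finset.card_image_of_injective _ ha, Finset.card_univ, Fintype.card_fin]
  refine Finset.eq_of_subset_of_card_le (fun x hx => ?_) ?_
  · obtain ⟨i, -, rfl⟩ := Finset.mem_image.1 hx
    have hi := hrange i
    refine Finset.mem_image.2 ⟨m + 1 - a i, Finset.mem_sdiff.2 ⟨?_, fun h => ?_⟩, by omega⟩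
    · exact Finset.mem_Icc.2 (by omega)
    · obtain ⟨j, -, hj⟩ := Finset.mem_image.1 h
      exact hdisj i j (by omega)
  · calc _ ≤ (Finset.Icc 1 m \ Finset.univ.image a).card := Finset.card_image_le
      _ = (Finset.univ.image a).card := by
        rw [Finset.card_sdiff_of_subset hsub, Nat.card_Icc, hcard]; omega

section Correlation

variable {K V : Type*} [Field K] [AddCommGroup V] [Module K V] [FiniteDimensional K V]

theorem finrank_inf_of_correlation {τ : Submodule K V → Submodule K V}
    (hτ_dim : ∀ X, finrank K (τ X) = finrank K V - finrank K X)
    (hτ_inf : ∀ X Y, τ (X ⊓ Y) = τ X ⊔ τ Y) (X Y : Submodule K V) :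
    finrank K ↥(τ X ⊓ τ Y) = finrank K V - finrank K ↥(X ⊔ Y) := by
  have hτ := Submodule.finrank_sup_add_finrank_inf_eq (τ X) (τ Y)
  rw [← hτ_inf, hτ_dim, hτ_dim, hτ_dim] at hτ
  have := Submodule.finrank_sup_add_finrank_inf_eq X Y
  have := X.finrank_le
  have := Y.finrank_le
  have := (X ⊓ Y).finrank_le
  have := (X ⊔ Y).finrank_le
  omega

end Correlation

section Schubert

variable {K V : Type*} [Field K] [AddCommGroup V] [Module K V] {L : ℕ}

def schubertVariety (G : Fin L → Submodule K V) : Set (Submodule K V) :=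
  {W | finrank K W = L ∧ ∀ i : Fin L, (i : ℕ) + 1 ≤ finrank K ↥(W ⊓ G i)}

variable [FiniteDimensional K V] {G : Fin L → Submodule K V}

theorem min_le_finrank_sup_span_inf (hG : Monotone G) {n : Fin L} {W : Submodule K V}
    (hW : finrank K W = n) (hWG : ∀ t : Fin L, min (n : ℕ) (t + 1) ≤ finrank K ↥(W ⊓ G t))
    {v : V} (hvG : v ∈ G n) (hvW : v ∉ W) (t : Fin L) :
    min ((n : ℕ) + 1) (t + 1) ≤ finrank K ↥((W ⊔ Submodule.span K {v}) ⊓ G t) := by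
  rcases lt_or_ge t n with htn | hnt
  · have := Submodule.finrank_mono
      (inf_le_inf_right (G t) (le_sup_left : W ≤ W ⊔ Submodule.span K {v}))
    have := hWG t
    omega
  · have hWt : W ≤ G t := inf_eq_left.1 <|
      Submodule.eq_of_le_of_finrank_le inf_le_left (by have := hWG t; omega)
    have hspan : Submodule.span K {v} ≤ G t :=
      (Submodule.span_singleton_le_iff_mem v _).2 (hG hnt hvG)
    rw [inf_eq_left.2 (sup_le hWt hspan), Submodule.finrank_sup_span_singleton hvW, hW]
    omega

theorem exists_mem_finrank_sup_span_inf_le (hG : StrictMono G)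
    (hG_dim : ∀ t : Fin L, (t : ℕ) + 1 ≤ finrank K (G t)) (U : Submodule K V) {n : Fin L}
    {W : Submodule K V} (hW : finrank K W = n)
    (hWU : ∀ j : Fin L, (j : ℕ) < finrank K ↥(W ⊓ U) → finrank K (G j) ≤ finrank K U) :
    ∃ v ∈ G n, v ∉ W ∧ ∀ j : Fin L, (j : ℕ) < finrank K ↥((W ⊔ Submodule.span K {v}) ⊓ U) →
      finrank K (G j) ≤ finrank K U := by
  have hWU_eq := Submodule.finrank_sup_add_finrank_inf_eq W U
  by_cases hforced : G n ≤ W ⊔ U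
  · obtain ⟨v, hvG, hvW⟩ := SetLike.not_le_iff_exists.1 fun hGW : G n ≤ W => by
      have := Submodule.finrank_mono hGW
      have := hG_dim n
      omega
    refine ⟨v, hvG, hvW, fun j hj => ?_⟩
    rcases lt_or_ge (j : ℕ) (finrank K ↥(W ⊓ U)) with hjW | hjW
    · exact hWU j hjW
    -- Now `j = dim (W ⊓ U)`, and `dim G n ≤ dim (W ⊔ U) = n + dim U - j` while `dim G` grows by
    -- at least one per step from `j` to `n`.
    have hW'U_eq := Submodule.finrank_sup_add_finrank_inf_eq (W ⊔ Submodule.span K {v}) U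
    rw [Submodule.finrank_sup_span_singleton hvW] at hW'U_eq
    have := Submodule.finrank_mono
      (sup_le_sup_right (le_sup_left : W ≤ W ⊔ Submodule.span K {v}) U)
    have := Submodule.finrank_mono hforced
    have := Submodule.finrank_mono (inf_le_left : W ⊓ U ≤ W)
    have hG_finrank : StrictMono fun t => finrank K (G t) :=
      fun _ _ h => Submodule.finrank_lt_finrank_of_lt (hG h)
    have hgap := hG_finrank.apply_add_le_apply_add (show j ≤ n by rw [Fin.le_def]; omega)
    omega
  · obtain ⟨v, hvG, hvWU⟩ := SetLike.not_le_iff_exists.1 hforced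
    have hvW : v ∉ W := fun h => hvWU (Submodule.mem_sup_left h)
    refine ⟨v, hvG, hvW, fun j hj => hWU j ?_⟩
    have hsup : (W ⊔ Submodule.span K {v}) ⊔ U = (W ⊔ U) ⊔ Submodule.span K {v} :=
      sup_right_comm ..
    have := Submodule.finrank_sup_add_finrank_inf_eq (W ⊔ Submodule.span K {v}) U
    rw [hsup, Submodule.finrank_sup_span_singleton hvWU,
      Submodule.finrank_sup_span_singleton hvW] at this
    omega

theorem exists_mem_schubertVariety_forall_finrank_le (hG : StrictMono G)
    (hG_dim : ∀ t : Fin L, (t : ℕ) + 1 ≤ finrank K (G t)) (U : Submodule K V) :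
    ∃ W ∈ schubertVariety G, ∀ j : Fin L, (j : ℕ) < finrank K ↥(W ⊓ U) →
      finrank K (G j) ≤ finrank K U := by
  suffices h : ∀ n ≤ L, ∃ W : Submodule K V, finrank K W = n ∧
      (∀ t : Fin L, min n (t + 1) ≤ finrank K ↥(W ⊓ G t)) ∧
      ∀ j : Fin L, (j : ℕ) < finrank K ↥(W ⊓ U) → finrank K (G j) ≤ finrank K U by
    obtain ⟨W, hW, hWG, hWU⟩ := h L le_rfl
    exact ⟨W, ⟨hW, fun t => (min_eq_right t.isLt).symm.trans_le (hWG t)⟩, hWU⟩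
  intro n
  induction n with
  | zero =>
    refine fun _ => ⟨⊥, finrank_bot K V, by simp, fun j hj => ?_⟩
    rw [bot_inf_eq, finrank_bot] at hj
    omega
  | succ n ih =>
    intro hn
    obtain ⟨W, hW, hWG, hWU⟩ := ih (by omega)
    obtain ⟨v, hvG, hvW, hv⟩ :=
      exists_mem_finrank_sup_span_inf_le (n := ⟨n, hn⟩) hG hG_dim U hW hWU
    exact ⟨_, by rw [Submodule.finrank_sup_span_singleton hvW, hW],
      min_le_finrank_sup_span_inf hG.monotone hW hWG hvG hvW, hv⟩

theorem add_le_add_of_image_schubertVariety_subset {τ : Submodule K V → Submodule K V}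
    (hτ_dim : ∀ X, finrank K (τ X) = finrank K V - finrank K X)
    (hτ_inf : ∀ X Y, τ (X ⊓ Y) = τ X ⊔ τ Y) (hτ_surj : Function.Surjective τ)
    (hG : StrictMono G) (hG_dim : ∀ t : Fin L, (t : ℕ) + 1 ≤ finrank K (G t))
    (hself : τ '' schubertVariety G ⊆ schubertVariety G) {i j : Fin L}
    (hij : finrank K V < finrank K (G i) + finrank K (G j)) :
    L + i + 1 ≤ finrank K (G i) + j := by
  obtain ⟨D, hD⟩ := hτ_surj (G i)
  have hD_dim := hτ_dim D
  rw [hD] at hD_dim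
  have := D.finrank_le
  have := (G i).finrank_le
  obtain ⟨W, hW, hWD⟩ := exists_mem_schubertVariety_forall_finrank_le hG hG_dim D
  have hτW := (hself ⟨W, hW, rfl⟩).2 i
  rw [← hD, finrank_inf_of_correlation hτ_dim hτ_inf] at hτW
  have hWD_le : finrank K ↥(W ⊓ D) ≤ j := by
    by_contra! h
    have := hWD j h
    omega
  have := Submodule.finrank_sup_add_finrank_inf_eq W D
  have := (W ⊔ D).finrank_le
  have := hW.1
  omega

end Schubert

theorem correlation_selfmap_index_condition_general
    (F : Type*) [Field F] (m ℓ : ℕ) (hm : m = 2 * ℓ)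
    (τ : Submodule F (Fin m → F) → Submodule F (Fin m → F))
    (hτ_dim : ∀ X, finrank F ↥(τ X) = m - finrank F ↥X)
    (hτ_inf : ∀ X Y, τ (X ⊓ Y) = τ X ⊔ τ Y)
    (hτ_bij : Function.Bijective τ)
    (a : Fin ℓ → ℕ) (ha : StrictMono a) (hrange : ∀ j, 1 ≤ a j ∧ a j ≤ m)
    (A : Fin ℓ → Submodule F (Fin m → F)) (hAmono : StrictMono A)
    (hdA : ∀ i, finrank F ↥(A i) = a i)
    (hself : τ '' {W : Submodule F (Fin m → F) |
        finrank F ↥W = ℓ ∧ ∀ i : Fin ℓ, (i : ℕ) + 1 ≤ finrank F ↥(W ⊓ A i)} =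
      {W : Submodule F (Fin m → F) |
        finrank F ↥W = ℓ ∧ ∀ i : Fin ℓ, (i : ℕ) + 1 ≤ finrank F ↥(W ⊓ A i)}) :
    Finset.univ.image a =
      (Finset.Icc 1 m \ Finset.univ.image a).image (fun j => m + 1 - j) := by
  have hV : finrank F (Fin m → F) = m := Module.finrank_fin_fun F
  have hA_dim : ∀ t : Fin ℓ, (t : ℕ) + 1 ≤ finrank F ↥(A t) := fun t => by
    have h0 := ha.apply_add_le_apply_add (i := ⟨0, t.pos⟩) (j := t) (Nat.zero_le _)
    dsimp only at h0
    have := hrange ⟨0, t.pos⟩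
    rw [hdA]
    omega
  refine image_eq_image_reflect_sdiff ha.injective hrange hm fun i j hij => ?_
  have key := fun i j => add_le_add_of_image_schubertVariety_subset
    (fun X => by rw [hτ_dim, hV]) hτ_inf hτ_bij.2 hAmono hA_dim hself.le (i := i) (j := j)
  have hi := key i j (by rw [hdA, hdA]; omega)
  have hj := key j i (by rw [hdA, hdA]; omega)
  rw [hdA] at hi hj
  omega

/-- With m = 2ℓ and τ a contravariant correlation on subspaces
(dim τ(X) = m − dim X, τ(X ∩ Y) = τ(X) + τ(Y), inclusion-reversing, bijective),
τ maps Ω_α^𝒜 onto itself only if α = {m+1−j : j ∉ α}. -/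
theorem correlation_selfmap_index_condition
    (F : Type*) [Field F] (m ℓ : ℕ) (hm : m = 2 * ℓ)
    (τ : Submodule F (Fin m → F) → Submodule F (Fin m → F))
    (hτ_dim : ∀ X, finrank F ↥(τ X) = m - finrank F ↥X)
    (hτ_inf : ∀ X Y, τ (X ⊓ Y) = τ X ⊔ τ Y)
    (hτ_anti : ∀ X Y, X ≤ Y → τ Y ≤ τ X)
    (hτ_bij : Function.Bijective τ)
    (a : Fin ℓ → ℕ) (ha : StrictMono a) (hrange : ∀ j, 1 ≤ a j ∧ a j ≤ m)
    (A : Fin ℓ → Submodule F (Fin m → F)) (hAmono : StrictMono A)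
    (hdA : ∀ i, finrank F ↥(A i) = a i)
    (hself : τ '' {W : Submodule F (Fin m → F) |
        finrank F ↥W = ℓ ∧ ∀ i : Fin ℓ, (i : ℕ) + 1 ≤ finrank F ↥(W ⊓ A i)} =
      {W : Submodule F (Fin m → F) |
        finrank F ↥W = ℓ ∧ ∀ i : Fin ℓ, (i : ℕ) + 1 ≤ finrank F ↥(W ⊓ A i)}) :
    Finset.univ.image a =
      (Finset.Icc 1 m \ Finset.univ.image a).image (fun j => m + 1 - j) :=
  correlation_selfmap_index_condition_general F m ℓ hm τ hτ_dim hτ_inf hτ_bij a ha hrange A hAmono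
    hdA hself
end

section
/- Kleiman–Laksov rigidity of the index set: if Ω_α^𝒜 = Ω_β^ℬ as subsets of the Grassmannian G(ℓ, m) of F^m (with F having at least 2 elements), where 𝒜 is an α-flag and ℬ is a β-flag with |α| = |β| = ℓ, then α = β. -/
open Module

section Aux

variable {F : Type*} [Field F] {m : ℕ}

private lemma slope_aux {ℓ : ℕ} (b : Fin ℓ → ℕ) (hb : StrictMono b) :
    ∀ (n : ℕ) (i k : Fin ℓ), (k : ℕ) = (i : ℕ) + n → b i + n ≤ b k := by
  intro n
  induction n with
  | zero =>
    intro i k h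
    have : i = k := Fin.ext (by omega)
    simp [this]
  | succ n ih =>
    intro i k h
    have hk' : (i : ℕ) + n < ℓ := by omega
    have h1 := ih i ⟨(i : ℕ) + n, hk'⟩ rfl
    have h2 : b ⟨(i : ℕ) + n, hk'⟩ < b k := hb (by simp [Fin.lt_def]; omega)
    omega

private lemma range_snoc_aux {α : Type*} {t : ℕ} (w : Fin t → α) (v : α) :
    Set.range (Fin.snoc w v : Fin (t + 1) → α) = insert v (Set.range w) := by
  ext x
  constructor
  · rintro ⟨s, rfl⟩
    refine Fin.lastCases ?_ (fun i => ?_) s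
    · left; simp
    · right; exact ⟨i, by simp⟩
  · rintro (rfl | ⟨s, rfl⟩)
    · exact ⟨Fin.last t, by simp⟩
    · exact ⟨s.castSucc, by simp⟩

/-- Key construction: a member of the Schubert set for the flag `B` that meets a
subspace `X` with `dim X < b j` in dimension at most `j`. -/
private lemma schubert_avoid {ℓ : ℕ} (b : Fin ℓ → ℕ) (hb : StrictMono b)
    (hb1 : ∀ i, 1 ≤ b i)
    (B : Fin ℓ → Submodule F (Fin m → F)) (hBmono : Monotone B)
    (hdB : ∀ i, finrank F ↥(B i) = b i) (X : Submodule F (Fin m → F)) (j : Fin ℓ)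
    (hX : finrank F ↥X < b j) :
    ∃ W : Submodule F (Fin m → F), finrank F ↥W = ℓ ∧
      (∀ i : Fin ℓ, (i : ℕ) + 1 ≤ finrank F ↥(W ⊓ B i)) ∧
      finrank F ↥(W ⊓ X) ≤ j := by
  have hbge : ∀ i : Fin ℓ, (i : ℕ) + 1 ≤ b i := by
    intro i
    have hpos : 0 < ℓ := lt_of_le_of_lt (Nat.zero_le _) i.isLt
    have := slope_aux b hb (i : ℕ) ⟨0, hpos⟩ i (by simp)
    have := hb1 ⟨0, hpos⟩
    omega
  -- main construction by recursion
  have main : ∀ t : ℕ, (ht : t ≤ ℓ) → ∃ w : Fin t → (Fin m → F),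
      (∀ s : Fin t, w s ∈ B ⟨s.1, lt_of_lt_of_le s.isLt ht⟩) ∧
      LinearIndependent F w ∧
      finrank F ↥X + t ≤ finrank F ↥(X ⊔ Submodule.span F (Set.range w)) + (j : ℕ) := by
    intro t
    induction t with
    | zero =>
      intro ht
      refine ⟨Fin.elim0, fun s => s.elim0, linearIndependent_empty_type, ?_⟩
      have hle : X ≤ X ⊔ Submodule.span F (Set.range (Fin.elim0 : Fin 0 → (Fin m → F))) :=
        le_sup_left
      have := Submodule.finrank_mono hle
      omega
    | succ t ih =>
      intro ht
      obtain ⟨w, hmem, hli, hD⟩ := ih (Nat.le_of_succ_le ht)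
      set P := X ⊔ Submodule.span F (Set.range w) with hP
      have htℓ : t < ℓ := ht
      by_cases hcase : B ⟨t, htℓ⟩ ≤ P
      · -- no new direction mod X available from B t; pick merely independent vector
        have hnot : ¬ B ⟨t, htℓ⟩ ≤ Submodule.span F (Set.range w) := by
          intro h
          have h1 : finrank F ↥(B ⟨t, htℓ⟩) ≤
              finrank F ↥(Submodule.span F (Set.range w)) := Submodule.finrank_mono h
          have h2 : finrank F ↥(Submodule.span F (Set.range w)) = t := by
            rw [finrank_span_eq_card hli, Fintype.card_fin]
          have h3 := hbge ⟨t, htℓ⟩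
          rw [hdB] at h1
          simp at h1 h3
          omega
        obtain ⟨v, hvB, hvns⟩ := SetLike.not_le_iff_exists.mp hnot
        refine ⟨Fin.snoc w v, ?_, linearIndependent_fin_snoc.mpr ⟨hli, hvns⟩, ?_⟩
        · intro s
          refine Fin.lastCases ?_ (fun i => ?_) s
          · simpa using hvB
          · simpa using hmem i
        · have hsub : Set.range w ⊆ Set.range (Fin.snoc w v : Fin (t+1) → (Fin m → F)) := by
            rw [range_snoc_aux]; exact Set.subset_insert _ _
          have hmono : P ≤ X ⊔ Submodule.span F
              (Set.range (Fin.snoc w v : Fin (t+1) → (Fin m → F))) :=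
            sup_le_sup le_rfl (Submodule.span_mono hsub)
          have h4 := Submodule.finrank_mono hmono
          have h5 : finrank F ↥(B ⟨t, htℓ⟩) ≤ finrank F ↥P := Submodule.finrank_mono hcase
          rw [hdB] at h5
          have hXP : X ≤ P := le_sup_left
          have h6 := Submodule.finrank_mono hXP
          rcases le_or_gt (j : ℕ) t with hjt | hjt
          · have hsl := slope_aux b hb (t - (j : ℕ)) j ⟨t, htℓ⟩ (by simp; omega)
            omega
          · omega
      · obtain ⟨v, hvB, hvP⟩ := SetLike.not_le_iff_exists.mp hcase
        have hvns : v ∉ Submodule.span F (Set.range w) := fun h =>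
          hvP (Submodule.mem_sup_right h)
        refine ⟨Fin.snoc w v, ?_, linearIndependent_fin_snoc.mpr ⟨hli, hvns⟩, ?_⟩
        · intro s
          refine Fin.lastCases ?_ (fun i => ?_) s
          · simpa using hvB
          · simpa using hmem i
        · have hEq : X ⊔ Submodule.span F
              (Set.range (Fin.snoc w v : Fin (t+1) → (Fin m → F)))
              = P ⊔ Submodule.span F {v} := by
            rw [range_snoc_aux, Submodule.span_insert,
              sup_comm (Submodule.span F {v}) (Submodule.span F (Set.range w)), ← sup_assoc]
          have hvPP : v ∈ P ⊔ Submodule.span F {v} :=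
            Submodule.mem_sup_right (Submodule.mem_span_singleton_self v)
          have hlt : P < P ⊔ Submodule.span F {v} :=
            SetLike.lt_iff_le_and_exists.mpr ⟨le_sup_left, v, hvPP, hvP⟩
          have h4 := Submodule.finrank_lt_finrank_of_lt hlt
          rw [hEq]
          omega
  obtain ⟨w, hmem, hli, hD⟩ := main ℓ le_rfl
  refine ⟨Submodule.span F (Set.range w), ?_, ?_, ?_⟩
  · rw [finrank_span_eq_card hli, Fintype.card_fin]
  · intro i
    have hle : (i : ℕ) + 1 ≤ ℓ := i.isLt
    set w' : Fin ((i : ℕ) + 1) → (Fin m → F) := w ∘ Fin.castLE hle with hw'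
    have hli' : LinearIndependent F w' := hli.comp _ (Fin.castLE_injective hle)
    have hle' : Submodule.span F (Set.range w') ≤ Submodule.span F (Set.range w) ⊓ B i := by
      rw [Submodule.span_le]
      rintro x ⟨s, rfl⟩
      refine ⟨Submodule.subset_span ⟨Fin.castLE hle s, rfl⟩, ?_⟩
      have hmem' := hmem (Fin.castLE hle s)
      have hsi : (⟨(Fin.castLE hle s).1, lt_of_lt_of_le (Fin.castLE hle s).isLt le_rfl⟩ :
          Fin ℓ) ≤ i := by
        simp [Fin.le_def]
        omega
      exact hBmono hsi hmem'
    have := Submodule.finrank_mono hle'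
    rw [finrank_span_eq_card hli', Fintype.card_fin] at this
    exact this
  · have hsum := Submodule.finrank_sup_add_finrank_inf_eq
      (Submodule.span F (Set.range w)) X
    rw [sup_comm] at hsum
    rw [finrank_span_eq_card hli, Fintype.card_fin] at hsum
    omega

end Aux

/-- Kleiman–Laksov rigidity: if Ω_α^𝒜 = Ω_β^ℬ for an α-flag 𝒜 and
a β-flag ℬ with |α| = |β| = ℓ, then α = β. -/
theorem kleiman_laksov_index_rigidity
    (F : Type*) [Field F] (m ℓ : ℕ)
    (a b : Fin ℓ → ℕ) (ha : StrictMono a) (hb : StrictMono b)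
    (harange : ∀ j, 1 ≤ a j ∧ a j ≤ m) (hbrange : ∀ j, 1 ≤ b j ∧ b j ≤ m)
    (A B : Fin ℓ → Submodule F (Fin m → F))
    (hAmono : StrictMono A) (hBmono : StrictMono B)
    (hdA : ∀ i, finrank F ↥(A i) = a i) (hdB : ∀ i, finrank F ↥(B i) = b i)
    (heq : {W : Submodule F (Fin m → F) |
        finrank F ↥W = ℓ ∧ ∀ i : Fin ℓ, (i : ℕ) + 1 ≤ finrank F ↥(W ⊓ A i)} =
      {W : Submodule F (Fin m → F) |
        finrank F ↥W = ℓ ∧ ∀ i : Fin ℓ, (i : ℕ) + 1 ≤ finrank F ↥(W ⊓ B i)}) :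
    a = b := by
  have hA1 : ∀ i, 1 ≤ a i := fun i => (harange i).1
  have hB1 : ∀ i, 1 ≤ b i := fun i => (hbrange i).1
  funext j
  have hab : a j ≤ b j := by
    by_contra hlt
    push_neg at hlt
    obtain ⟨W, hW1, hW2, hW3⟩ := schubert_avoid a ha hA1 A hAmono.monotone hdA (B j) j
      (by rw [hdB]; exact hlt)
    have hWA : W ∈ {W : Submodule F (Fin m → F) |
        finrank F ↥W = ℓ ∧ ∀ i : Fin ℓ, (i : ℕ) + 1 ≤ finrank F ↥(W ⊓ A i)} := ⟨hW1, hW2⟩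
    rw [heq] at hWA
    have := hWA.2 j
    omega
  have hba : b j ≤ a j := by
    by_contra hlt
    push_neg at hlt
    obtain ⟨W, hW1, hW2, hW3⟩ := schubert_avoid b hb hB1 B hBmono.monotone hdB (A j) j
      (by rw [hdA]; exact hlt)
    have hWB : W ∈ {W : Submodule F (Fin m → F) |
        finrank F ↥W = ℓ ∧ ∀ i : Fin ℓ, (i : ℕ) + 1 ≤ finrank F ↥(W ⊓ B i)} := ⟨hW1, hW2⟩
    rw [← heq] at hWB
    have := hWB.2 j
    omega
  omega
end
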